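/- Let G be a two-unicast layered network and let P_11 (from s_1 to d_1) and P_22 (from s_2 to d_2) be disjoint paths. Fix i in {1,2} and suppose that, for the pair (P_11,P_22), at least two nodes cause interference on P_ii, i.e. n_i(G[V]) >= 2. Let v_p be the first node along P_ii such that every path from s_{i'} to d_i contains v_p. Then there exist two distinct in-neighbours u and w of v_p (u, w in I(v_p)) such that s_{i'}~>u and s_{i'}~>w. -/

import Mathlib

open List

/-- `IsPath E p u w` : the nonempty list `p` of vertices is a directed path
from `u` to `w` with respect to the edge relation `E`. -/
def IsPath {V : Type*} (E : V → V → Prop) (p : List V) (u w : V) : Prop :=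
  p ≠ [] ∧ p.head? = some u ∧ p.getLast? = some w ∧ p.Chain' E

/-- `Reaches E u w` (written `u ~> w`) : there is a directed path from `u` to `w`. -/
def Reaches {V : Type*} (E : V → V → Prop) (u w : V) : Prop :=
  ∃ p, IsPath E p u w

/-- A two-unicast layered network: a finite directed graph, with two sources
`s1, s2` and two destinations `d1, d2` (all four distinct), vertices partitioned
into layers `1, ..., r` such that every edge goes from a layer to the next one,
the first layer is `{s1, s2}`, the last layer is `{d1, d2}`, and each source
reaches its corresponding destination. -/
structure TwoUnicastNetwork (V : Type*) [Fintype V] where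
  E : V → V → Prop
  s1 : V
  s2 : V
  d1 : V
  d2 : V
  r : ℕ
  layer : V → ℕ
  layer_pos : ∀ v, 1 ≤ layer v
  layer_le : ∀ v, layer v ≤ r
  edge_layer : ∀ u w, E u w → layer w = layer u + 1
  s_ne : s1 ≠ s2
  d_ne : d1 ≠ d2
  sd_ne : ∀ s d, (s = s1 ∨ s = s2) → (d = d1 ∨ d = d2) → s ≠ d
  first_layer : ∀ v, layer v = 1 ↔ v = s1 ∨ v = s2
  last_layer : ∀ v, layer v = r ↔ v = d1 ∨ v = d2
  conn1 : Reaches E s1 d1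
  conn2 : Reaches E s2 d2

/-- `InterferesOn N S Ri srcOther v` : within the induced subgraph `G[S]`, the
node `v` causes interference on the path `Ri` : `v ∈ S`, `v ∉ Ri`, there is an
edge (inside `G[S]`) from `v` into a node of `Ri`, and there is a path from the
other source `srcOther` to `v` lying inside `G[S]` and disjoint from `Ri`. -/
def InterferesOn {V : Type*} [Fintype V] (N : TwoUnicastNetwork V) (S : Set V)
    (Ri : List V) (srcOther : V) (v : V) : Prop :=
  v ∈ S ∧ v ∉ Ri ∧ (∃ w ∈ Ri, w ∈ S ∧ N.E v w) ∧
    ∃ q, IsPath N.E q srcOther v ∧ (∀ x ∈ q, x ∈ S) ∧ ∀ x ∈ q, x ∉ Ri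

/-- `n_i(G[S])` : the number of nodes causing interference on `Ri` within the
induced subgraph `G[S]`, the interfering path coming from `srcOther`. -/
noncomputable def nInterf {V : Type*} [Fintype V] (N : TwoUnicastNetwork V)
    (S : Set V) (Ri : List V) (srcOther : V) : ℕ :=
  {v | InterferesOn N S Ri srcOther v}.ncard

/-- `n_i^D` : the number of nodes of the other path `Rother` causing (direct)
interference on `Ri` in `G`. -/
noncomputable def nDirect {V : Type*} [Fintype V] (N : TwoUnicastNetwork V)
    (Ri Rother : List V) (srcOther : V) : ℕ :=
  {v | InterferesOn N Set.univ Ri srcOther v ∧ v ∈ Rother}.ncard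

/-- The pair `(R1, R2)` (paths `s1 → d1` and `s2 → d2`) has manageable
interference: there is `S ⊇ R1 ∪ R2` with `n_1(G[S]) ≠ 1` and `n_2(G[S]) ≠ 1`. -/
def Manageable {V : Type*} [Fintype V] (N : TwoUnicastNetwork V)
    (R1 R2 : List V) : Prop :=
  ∃ S : Set V, (∀ x ∈ R1, x ∈ S) ∧ (∀ x ∈ R2, x ∈ S) ∧
    nInterf N S R1 N.s2 ≠ 1 ∧ nInterf N S R2 N.s1 ≠ 1

/-- The pair `(R1, R2)` has `(s1,d1)`-manageable interference. -/
def Manageable1 {V : Type*} [Fintype V] (N : TwoUnicastNetwork V)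
    (R1 R2 : List V) : Prop :=
  ∃ S : Set V, (∀ x ∈ R1, x ∈ S) ∧ (∀ x ∈ R2, x ∈ S) ∧ nInterf N S R1 N.s2 ≠ 1

/-- The pair `(R1, R2)` has `(s2,d2)`-manageable interference. -/
def Manageable2 {V : Type*} [Fintype V] (N : TwoUnicastNetwork V)
    (R1 R2 : List V) : Prop :=
  ∃ S : Set V, (∀ x ∈ R1, x ∈ S) ∧ (∀ x ∈ R2, x ∈ S) ∧ nInterf N S R2 N.s1 ≠ 1

/-- Removal of the vertex `v` disconnects `a` from `b` :
every path from `a` to `b` contains `v`. -/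
def CutVert {V : Type*} [Fintype V] (N : TwoUnicastNetwork V) (v a b : V) : Prop :=
  ∀ p, IsPath N.E p a b → v ∈ p

/-!
Suppose `vp` had at most one in-neighbour reachable from `soi`. Every path from `soi` to `di`
passes through `vp` and enters it through such an in-neighbour, so that in-neighbour also
separates `soi` from `di`; lying one layer before `vp`, it cannot be on `Pii` by the choice of
`vp`. On the other hand, the path from `soi` to an interferer, continued along `Pii`, enters
`vp` either from the interferer itself or from a node of `Pii`. Hence every interferer is that
single in-neighbour, contradicting `n_i ≥ 2`.
-/

section Paths

variable {V : Type*} {E : V → V → Prop} {p q s t : List V} {a b x y : V}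

lemma IsPath.append (hp : IsPath E p a x) (hq : IsPath E q y b) (h : E x y) :
    IsPath E (p ++ q) a b := by
  refine ⟨by simp [hp.1], ?_, ?_, ?_⟩
  · rw [List.head?_append, hp.2.1]; rfl
  · rw [List.getLast?_append, hq.2.2.1]; rfl
  · refine List.IsChain.append hp.2.2.2 hq.2.2.2 ?_
    rw [hp.2.2.1, hq.2.1]
    simpa using h

lemma Reaches.trans_of_rel (hax : Reaches E a x) (h : E x y) (hyb : Reaches E y b) :
    Reaches E a b :=
  let ⟨_, hp⟩ := hax
  let ⟨_, hq⟩ := hyb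
  ⟨_, hp.append hq h⟩

lemma IsPath.split (hp : IsPath E (s ++ x :: t) a b) :
    IsPath E (s ++ [x]) a x ∧ IsPath E (x :: t) x b := by
  obtain ⟨-, hhead, hlast, hchain⟩ := hp
  obtain ⟨hleft, hright⟩ := List.isChain_split.1 hchain
  refine ⟨⟨by simp, ?_, by simp, hleft⟩, ⟨by simp, rfl, ?_, hright⟩⟩
  · rw [← hhead]; cases s <;> rfl
  · rw [← hlast, List.getLast?_append_cons]

lemma IsPath.exists_pred (hp : IsPath E p a b) (hx : x ∈ p) (hxa : x ≠ a) :
    ∃ u ∈ p, E u x ∧ Reaches E a u := by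
  obtain ⟨s, t, rfl⟩ := List.append_of_mem hx
  obtain ⟨s, u, rfl⟩ : ∃ s' u, s = s' ++ [u] := by
    rcases List.eq_nil_or_concat s with rfl | ⟨s', u, rfl⟩
    · exact absurd (by simpa using hp.2.1) hxa
    · exact ⟨s', u, by simp⟩
  rw [List.append_assoc, List.singleton_append] at hp
  exact ⟨u, by simp, (List.isChain_append_cons_cons.1 hp.2.2.2).2.1, _, hp.split.1⟩

lemma IsPath.getElem_zero (hp : IsPath E p a b) : p[0]'(List.length_pos_iff.2 hp.1) = a := by
  rw [List.getElem_zero]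
  simpa [List.head?_eq_some_head hp.1] using hp.2.1

variable {f : V → ℕ}

lemma IsPath.apply_getElem (hf : ∀ u w, E u w → f w = f u + 1)
    (hp : IsPath E p a b) (i : ℕ) (hi : i < p.length) : f p[i] = f a + i := by
  induction i with
  | zero => simp [hp.getElem_zero]
  | succ i ih =>
    rw [hf _ _ ((List.isChain_iff_getElem.1 hp.2.2.2) i hi), ih (by omega)]
    omega

lemma IsPath.eq_of_mem_of_apply_eq (hf : ∀ u w, E u w → f w = f u + 1)
    (hp : IsPath E p a b) (hx : x ∈ p) (h : f x = f a) : x = a := by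
  obtain ⟨i, hi, rfl⟩ := List.getElem_of_mem hx
  obtain rfl : i = 0 := by have := hp.apply_getElem hf i hi; omega
  exact hp.getElem_zero

lemma IsPath.idxOf_lt_of_rel [DecidableEq V] (hf : ∀ u w, E u w → f w = f u + 1)
    (hp : IsPath E p a b) (hx : x ∈ p) (hy : y ∈ p) (hxy : E x y) :
    p.idxOf x < p.idxOf y := by
  have hfx := hp.apply_getElem hf _ (List.idxOf_lt_length_iff.2 hx)
  have hfy := hp.apply_getElem hf _ (List.idxOf_lt_length_iff.2 hy)
  rw [List.getElem_idxOf] at hfx hfy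
  have := hf _ _ hxy
  omega

end Paths

def reachableInNeighbours {V : Type*} (E : V → V → Prop) (s v : V) : Set V :=
  {u | E u v ∧ Reaches E s u}

section Interference

variable {V : Type*} [Fintype V] {N : TwoUnicastNetwork V} {S : Set V} {Pii : List V}
  {si di soi vp u v : V}

lemma IsPath.source_not_mem {p : List V} {s d s' : V} (hp : IsPath N.E p s d)
    (hs : s = N.s1 ∨ s = N.s2) (hs' : s' = N.s1 ∨ s' = N.s2) (hne : s' ≠ s) : s' ∉ p :=
  fun h => hne <| hp.eq_of_mem_of_apply_eq N.edge_layer h <| by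
    rw [(N.first_layer _).2 hs, (N.first_layer _).2 hs']

/-- The path to the interferer, continued along `Pii`, must pass through `vp`. -/
lemma InterferesOn.mem_reachableInNeighbours_or (hPii : IsPath N.E Pii si di) (hvp : vp ∈ Pii)
    (hcut : CutVert N vp soi di) (hv : InterferesOn N S Pii soi v) :
    v ∈ reachableInNeighbours N.E soi vp ∨ ∃ u ∈ Pii, u ∈ reachableInNeighbours N.E soi vp := by
  obtain ⟨-, -, ⟨w, hw, -, hvw⟩, q, hq, -, hqPii⟩ := hv
  obtain ⟨s, t, rfl⟩ := List.append_of_mem hw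
  have hwt := hPii.split.2
  have hvp' : vp ∈ w :: t := by
    rcases List.mem_append.1 (hcut _ (hq.append hwt hvw)) with h | h
    · exact absurd hvp (hqPii vp h)
    · exact h
  by_cases hvpw : vp = w
  · subst hvpw
    exact Or.inl ⟨hvw, q, hq⟩
  · obtain ⟨u, hu, huvp, hwu⟩ := hwt.exists_pred hvp' hvpw
    exact Or.inr ⟨u, List.mem_append_right _ hu, huvp, Reaches.trans_of_rel ⟨q, hq⟩ hvw hwu⟩

lemma CutVert.of_reachableInNeighbours_subsingleton (hcut : CutVert N vp soi di)
    (hvp : vp ≠ soi) (hR : (reachableInNeighbours N.E soi vp).Subsingleton)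
    (hu : u ∈ reachableInNeighbours N.E soi vp) : CutVert N u soi di := by
  intro p hp
  obtain ⟨x, hx, hxvp, hsx⟩ := hp.exists_pred (hcut p hp) hvp
  rwa [← hR ⟨hxvp, hsx⟩ hu]

theorem reachableInNeighbours_nontrivial [DecidableEq V] (hPii : IsPath N.E Pii si di)
    (hsoi : soi ∉ Pii) (hn : 2 ≤ nInterf N S Pii soi) (hvp : vp ∈ Pii)
    (hcut : CutVert N vp soi di)
    (hfirst : ∀ u ∈ Pii, CutVert N u soi di → Pii.idxOf vp ≤ Pii.idxOf u) :
    (reachableInNeighbours N.E soi vp).Nontrivial := by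
  by_contra hR
  rw [Set.not_nontrivial_iff] at hR
  have hPii_disj : ∀ u ∈ Pii, u ∉ reachableInNeighbours N.E soi vp := fun u hu huR => by
    have := hfirst u hu <| hcut.of_reachableInNeighbours_subsingleton
      (ne_of_mem_of_not_mem hvp hsoi) hR huR
    have := hPii.idxOf_lt_of_rel N.edge_layer hu hvp huR.1
    omega
  have hsub : {v | InterferesOn N S Pii soi v} ⊆ reachableInNeighbours N.E soi vp :=
    fun v hv => (hv.mem_reachableInNeighbours_or hPii hvp hcut).resolve_right
      fun ⟨u, hu, huR⟩ => hPii_disj u hu huR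
  have := (Set.ncard_le_ncard hsub).trans (Set.ncard_le_one_iff_subsingleton.2 hR)
  unfold nInterf at hn
  omega

end Interference

theorem statement1_general {V : Type*} [Fintype V] [DecidableEq V]
    (N : TwoUnicastNetwork V) (P11 P22 : List V)
    (hP11 : IsPath N.E P11 N.s1 N.d1)
    (hP22 : IsPath N.E P22 N.s2 N.d2)
    (si di soi : V) (Pii : List V)
    (hi : (si = N.s1 ∧ di = N.d1 ∧ soi = N.s2 ∧ Pii = P11) ∨
          (si = N.s2 ∧ di = N.d2 ∧ soi = N.s1 ∧ Pii = P22))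
    (hn : 2 ≤ nInterf N Set.univ Pii soi)
    (vp : V)
    (hvpPii : vp ∈ Pii)
    (hvpcut : ∀ p : List V, IsPath N.E p soi di → vp ∈ p)
    (hvpfirst : ∀ u ∈ Pii, (∀ p : List V, IsPath N.E p soi di → u ∈ p) →
      Pii.idxOf vp ≤ Pii.idxOf u) :
    ∃ u w : V, u ≠ w ∧ N.E u vp ∧ N.E w vp ∧
      Reaches N.E soi u ∧ Reaches N.E soi w := by
  obtain ⟨hPii, hsoi⟩ : IsPath N.E Pii si di ∧ soi ∉ Pii := by
    rcases hi with ⟨rfl, rfl, rfl, rfl⟩ | ⟨rfl, rfl, rfl, rfl⟩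
    · exact ⟨hP11, hP11.source_not_mem (.inl rfl) (.inr rfl) N.s_ne.symm⟩
    · exact ⟨hP22, hP22.source_not_mem (.inr rfl) (.inl rfl) N.s_ne⟩
  obtain ⟨u, ⟨hu, hsu⟩, w, ⟨hw, hsw⟩, huw⟩ :=
    reachableInNeighbours_nontrivial hPii hsoi hn hvpPii hvpcut hvpfirst
  exact ⟨u, w, huw, hu, hw, hsu, hsw⟩

theorem statement1 {V : Type*} [Fintype V] [DecidableEq V]
    (N : TwoUnicastNetwork V) (P11 P22 : List V)
    (hP11 : IsPath N.E P11 N.s1 N.d1)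
    (hP22 : IsPath N.E P22 N.s2 N.d2)
    (hdisj : P11.Disjoint P22)
    (si di soi : V) (Pii : List V)
    (hi : (si = N.s1 ∧ di = N.d1 ∧ soi = N.s2 ∧ Pii = P11) ∨
          (si = N.s2 ∧ di = N.d2 ∧ soi = N.s1 ∧ Pii = P22))
    (hn : 2 ≤ nInterf N Set.univ Pii soi)
    (vp : V)
    (hvpPii : vp ∈ Pii)
    (hvpcut : ∀ p : List V, IsPath N.E p soi di → vp ∈ p)
    (hvpfirst : ∀ u ∈ Pii, (∀ p : List V, IsPath N.E p soi di → u ∈ p) →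
      Pii.idxOf vp ≤ Pii.idxOf u) :
    ∃ u w : V, u ≠ w ∧ N.E u vp ∧ N.E w vp ∧
      Reaches N.E soi u ∧ Reaches N.E soi w :=
  statement1_general N P11 P22 hP11 hP22 si di soi Pii hi hn vp hvpPii hvpcut hvpfirst
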